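/- arXiv:2602.17488 — 3 statements merged into one kernel-verified Lean document; each statement's English description precedes it below -/
import Mathlib

section
/- Let d be a positive integer, κ > 0, i = (i₁, i₂, i₃) ∈ [d]³, s = (s₁, s₂, s₃) ∈ {−1, 1}³, and x ∈ {−1, 1}^d. Suppose there exists j ∈ {1, 2, 3} with x_{i_j} = s_j. Set x' = κ·x, C^ψ = {c^{ψ,1}, c^{ψ,2}, c^{ψ,3}} with c^{ψ,j} = 2κ·s_j·𝟏_{i_j}, and C^0 = {0}. Then cost_{C^0,∞}(x') + cost_{C^ψ,∞}(x') ≤ 2κ². -/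
/-- The `i`-th standard basis vector of `ℝ^d`. -/
def basisVec {d : ℕ} (i : Fin d) : Fin d → ℝ := Pi.single i 1

/-- The `k`-means cost query in the `ℓ_∞` metric: `cost_{C,∞}(x) = min_{c ∈ C} ‖x - c‖_∞²`.
(The norm on `Fin d → ℝ` is the sup norm.) -/
noncomputable def costInf {d k : ℕ} (C : Fin k → (Fin d → ℝ)) (x : Fin d → ℝ) : ℝ :=
  ⨅ j : Fin k, ‖x - C j‖ ^ 2

lemma norm_pi_eq {d : ℕ} (hd : 0 < d) (κ : ℝ) (hκ : 0 ≤ κ) (y : Fin d → ℝ)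
    (h : ∀ i, |y i| = κ) : ‖y‖ = κ := by
  apply le_antisymm
  · exact (pi_norm_le_iff_of_nonneg hκ).2 fun i => by rw [Real.norm_eq_abs, h i]
  · have := norm_le_pi_norm y ⟨0, hd⟩
    rwa [Real.norm_eq_abs, h] at this

theorem stmt_2 (d : ℕ) (hd : 0 < d) (κ : ℝ) (hκ : 0 < κ)
    (idx : Fin 3 → Fin d) (s : Fin 3 → ℝ) (hs : ∀ j, s j = 1 ∨ s j = -1)
    (x : Fin d → ℝ) (hx : ∀ i, x i = 1 ∨ x i = -1)
    (hsat : ∃ j : Fin 3, x (idx j) = s j) :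
    costInf (fun _ : Fin 1 => (0 : Fin d → ℝ)) (κ • x) +
      costInf (fun j : Fin 3 => (2 * κ * s j) • basisVec (idx j)) (κ • x) ≤ 2 * κ ^ 2 := by
  obtain ⟨j, hj⟩ := hsat
  have hx' : ∀ i, |x i| = 1 := fun i => by rcases hx i with h | h <;> simp [h]
  have hs' : |s j| = 1 := by rcases hs j with h | h <;> simp [h]
  have h1 : costInf (fun _ : Fin 1 => (0 : Fin d → ℝ)) (κ • x) = κ ^ 2 := by
    unfold costInf
    rw [ciInf_const, sub_zero]
    have : ‖κ • x‖ = κ := norm_pi_eq hd κ hκ.le _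
      (fun i => by simp [abs_mul, hx' i, abs_of_pos hκ])
    rw [this]
  have h2 : costInf (fun j : Fin 3 => (2 * κ * s j) • basisVec (idx j)) (κ • x) ≤ κ ^ 2 := by
    unfold costInf
    have hb : BddBelow (Set.range fun j : Fin 3 =>
        ‖κ • x - (2 * κ * s j) • basisVec (idx j)‖ ^ 2) := by
      refine ⟨0, ?_⟩
      rintro _ ⟨j, rfl⟩
      positivity
    refine le_trans (ciInf_le hb j) ?_
    have hn : ‖κ • x - (2 * κ * s j) • basisVec (idx j)‖ = κ := by
      refine norm_pi_eq hd κ hκ.le _ fun i => ?_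
      by_cases hi : i = idx j
      · subst hi
        simp only [Pi.sub_apply, Pi.smul_apply, smul_eq_mul]
        have h2' : κ * x (idx j) - 2 * κ * s j * basisVec (idx j) (idx j) = -(κ * s j) := by
          simp [basisVec, Pi.single_eq_same, hj]; ring
        rw [h2', abs_neg, abs_mul, hs', abs_of_pos hκ, mul_one]
      · simp only [Pi.sub_apply, Pi.smul_apply, smul_eq_mul]
        rw [show basisVec (idx j) i = 0 from Pi.single_eq_of_ne hi 1]
        simp [abs_mul, hx' i, abs_of_pos hκ]
    rw [hn]
  rw [h1]; linarith
end

section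
/- Let d be a positive integer, κ > 0, and y ∈ ℝ^d. For i ∈ [d] let C^i = {+dκ·𝟏_i, −dκ·𝟏_i}. Then ∑_{i=1}^d cost_{C^i,2}(y) = (d³ − d²)·κ² + d·‖y − κ·sgn(y)‖₂². -/
open scoped BigOperators

/-- `sgn v = 1` if `v ≥ 0` and `-1` if `v < 0`. -/
noncomputable def sgn (v : ℝ) : ℝ := if 0 ≤ v then 1 else -1

/-- Coordinatewise sign of a vector in Euclidean space. -/
noncomputable def sgnVecE {d : ℕ} (y : EuclideanSpace ℝ (Fin d)) : EuclideanSpace ℝ (Fin d) :=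
  WithLp.toLp 2 (fun i => sgn (y i))

/-- The `k`-means cost query in the Euclidean metric: `cost_{C,2}(x) = min_{c ∈ C} ‖x - c‖₂²`. -/
noncomputable def costE {d k : ℕ} (C : Fin k → EuclideanSpace ℝ (Fin d))
    (x : EuclideanSpace ℝ (Fin d)) : ℝ :=
  ⨅ j : Fin k, ‖x - C j‖ ^ 2

/-!
Expanding the squares, the cost of `y` against `{± r 𝟏_i}` (with `r = dκ ≥ 0`) is
`‖y‖² + r² - 2r|y_i|`, the nearer centre being the one on the side of `y_i`. On the other side,
`⟪y, sgn y⟫ = ∑ |y_i|` and `‖sgn y‖² = d`, so `‖y - κ sgn y‖² = ‖y‖² - 2κ ∑ |y_i| + dκ²`.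
Summing the costs over `i` and comparing gives the identity.
-/

lemma sgn_mul_self (v : ℝ) : sgn v * v = |v| := by
  unfold sgn
  split_ifs with h
  · rw [one_mul, abs_of_nonneg h]
  · rw [abs_of_neg (not_le.mp h), neg_one_mul]

lemma sgn_sq (v : ℝ) : sgn v ^ 2 = 1 := by
  unfold sgn
  split_ifs <;> norm_num

lemma inner_sgnVecE_right {d : ℕ} (y : EuclideanSpace ℝ (Fin d)) :
    inner ℝ y (sgnVecE y) = ∑ i, |y i| := by
  simp [PiLp.inner_apply, sgnVecE, sgn_mul_self]

lemma norm_sgnVecE_sq {d : ℕ} (y : EuclideanSpace ℝ (Fin d)) : ‖sgnVecE y‖ ^ 2 = d := by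
  simp [EuclideanSpace.norm_sq_eq, sgnVecE, sgn_sq]

lemma norm_sub_smul_sgnVecE_sq {d : ℕ} (y : EuclideanSpace ℝ (Fin d)) (κ : ℝ) :
    ‖y - κ • sgnVecE y‖ ^ 2 = ‖y‖ ^ 2 - 2 * κ * ∑ i, |y i| + d * κ ^ 2 := by
  rw [norm_sub_sq_real, inner_smul_right, norm_smul, mul_pow, Real.norm_eq_abs, sq_abs,
    inner_sgnVecE_right, norm_sgnVecE_sq]
  ring

lemma norm_sub_smul_single_sq {d : ℕ} (y : EuclideanSpace ℝ (Fin d)) (i : Fin d) (s : ℝ) :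
    ‖y - s • EuclideanSpace.single i (1 : ℝ)‖ ^ 2 = ‖y‖ ^ 2 - 2 * s * y i + s ^ 2 := by
  rw [norm_sub_sq_real, inner_smul_right, EuclideanSpace.inner_single_right, norm_smul,
    PiLp.norm_single, mul_pow, Real.norm_eq_abs, sq_abs]
  simp only [Real.ringHom_apply, one_mul, norm_one, one_pow, mul_one]
  ring

lemma costE_pair {d : ℕ} (c₀ c₁ y : EuclideanSpace ℝ (Fin d)) :
    costE ![c₀, c₁] y = min (‖y - c₀‖ ^ 2) (‖y - c₁‖ ^ 2) := by
  have hbdd : BddBelow (Set.range fun j => ‖y - ![c₀, c₁] j‖ ^ 2) :=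
    (Set.finite_range _).bddBelow
  refine le_antisymm (le_min (ciInf_le hbdd 0) (ciInf_le hbdd 1)) (le_ciInf fun j => ?_)
  fin_cases j
  · exact min_le_left _ _
  · exact min_le_right _ _

lemma costE_pm_single {d : ℕ} (y : EuclideanSpace ℝ (Fin d)) (i : Fin d) {r : ℝ} (hr : 0 ≤ r) :
    costE ![r • EuclideanSpace.single i (1 : ℝ), (-r) • EuclideanSpace.single i (1 : ℝ)] y =
      ‖y‖ ^ 2 + r ^ 2 - 2 * r * |y i| := by
  rw [costE_pair, norm_sub_smul_single_sq, norm_sub_smul_single_sq]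
  rcases le_total 0 (y i) with hy | hy
  · rw [min_eq_left (by nlinarith), abs_of_nonneg hy]
    ring
  · rw [min_eq_right (by nlinarith), abs_of_nonpos hy]
    ring

theorem stmt_8_general (d : ℕ) (κ : ℝ) (hκ : 0 < κ)
    (y : EuclideanSpace ℝ (Fin d)) :
    ∑ i : Fin d,
        costE ![(d * κ) • EuclideanSpace.single i (1 : ℝ),
                (-(d * κ)) • EuclideanSpace.single i (1 : ℝ)] y =
      ((d : ℝ) ^ 3 - (d : ℝ) ^ 2) * κ ^ 2 + d * ‖y - κ • sgnVecE y‖ ^ 2 := by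
  simp only [costE_pm_single y _ (by positivity : (0 : ℝ) ≤ d * κ), norm_sub_smul_sgnVecE_sq,
    Finset.sum_sub_distrib, ← Finset.mul_sum, Finset.sum_const, Finset.card_univ,
    Fintype.card_fin, nsmul_eq_mul]
  ring

theorem stmt_8 (d : ℕ) (hd : 0 < d) (κ : ℝ) (hκ : 0 < κ)
    (y : EuclideanSpace ℝ (Fin d)) :
    ∑ i : Fin d,
        costE ![(d * κ) • EuclideanSpace.single i (1 : ℝ),
                (-(d * κ)) • EuclideanSpace.single i (1 : ℝ)] y =
      ((d : ℝ) ^ 3 - (d : ℝ) ^ 2) * κ ^ 2 + d * ‖y - κ • sgnVecE y‖ ^ 2 :=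
  stmt_8_general d κ hκ y
end

section
/- Let d be a positive integer, κ > 0, i = (i₁, i₂, i₃) ∈ [d]³, s = (s₁, s₂, s₃) ∈ {−1, 1}³, and x ∈ {−1, 1}^d. Suppose there exists j ∈ {1, 2, 3} with x_{i_j} = s_j. Set x' = κ·x, C^ψ = {c^{ψ,1}, c^{ψ,2}, c^{ψ,3}} with c^{ψ,j} = 2κ·s_j·𝟏_{i_j}, and C^0 = {0}. Then cost_{C^ψ,2}(x') − cost_{C^0,2}(x') ≤ 0. -/
/-! The center `2κ sⱼ 𝟏_{iⱼ}` with `sⱼ = x_{iⱼ}` is the mirror image of `0` in the hyperplane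
through `κ x` orthogonal to `𝟏_{iⱼ}`, so it lies exactly as far from `κ x` as `0` does. -/

theorem costE_le {d k : ℕ} (C : Fin k → EuclideanSpace ℝ (Fin d))
    (x : EuclideanSpace ℝ (Fin d)) (j : Fin k) : costE C x ≤ ‖x - C j‖ ^ 2 :=
  ciInf_le ⟨0, by rintro _ ⟨i, rfl⟩; positivity⟩ j

theorem costE_const {d k : ℕ} [NeZero k] (c x : EuclideanSpace ℝ (Fin d)) :
    costE (fun _ : Fin k => c) x = ‖x - c‖ ^ 2 :=
  ciInf_const

theorem norm_sub_two_inner_smul_of_norm_eq_one {E : Type*} [NormedAddCommGroup E]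
    [InnerProductSpace ℝ E] (y : E) {u : E} (hu : ‖u‖ = 1) :
    ‖y - (2 * inner ℝ y u) • u‖ = ‖y‖ := by
  rw [← sq_eq_sq₀ (norm_nonneg _) (norm_nonneg _), norm_sub_sq_real, real_inner_smul_right,
    norm_smul, Real.norm_eq_abs, hu, mul_one, sq_abs]
  ring

theorem EuclideanSpace.norm_sub_two_mul_apply_smul_single {ι : Type*} [Fintype ι]
    [DecidableEq ι] (y : EuclideanSpace ℝ ι) (i : ι) :
    ‖y - (2 * y i) • EuclideanSpace.single i (1 : ℝ)‖ = ‖y‖ := by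
  have hinner : inner ℝ y (EuclideanSpace.single i (1 : ℝ)) = y i := by
    rw [EuclideanSpace.inner_single_right, one_mul, conj_trivial]
  have hunit : ‖EuclideanSpace.single i (1 : ℝ)‖ = 1 := by
    rw [EuclideanSpace.single, PiLp.norm_single, norm_one]
  rw [← hinner, norm_sub_two_inner_smul_of_norm_eq_one y hunit]

theorem stmt_10_general (d : ℕ) (κ : ℝ)
    (idx : Fin 3 → Fin d) (s : Fin 3 → ℝ)
    (x : EuclideanSpace ℝ (Fin d))
    (hsat : ∃ j : Fin 3, x (idx j) = s j) :
    costE (fun j : Fin 3 => (2 * κ * s j) • EuclideanSpace.single (idx j) (1 : ℝ)) (κ • x) -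
        costE (fun _ : Fin 1 => (0 : EuclideanSpace ℝ (Fin d))) (κ • x) ≤ 0 := by
  obtain ⟨j, hj⟩ := hsat
  have hcenter : 2 * κ * s j = 2 * (κ • x) (idx j) := by
    rw [PiLp.smul_apply, smul_eq_mul, hj, mul_assoc]
  rw [costE_const, sub_zero, sub_nonpos]
  refine (costE_le _ _ j).trans_eq ?_
  rw [hcenter, EuclideanSpace.norm_sub_two_mul_apply_smul_single]

theorem stmt_10 (d : ℕ) (hd : 0 < d) (κ : ℝ) (hκ : 0 < κ)
    (idx : Fin 3 → Fin d) (s : Fin 3 → ℝ) (hs : ∀ j, s j = 1 ∨ s j = -1)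
    (x : EuclideanSpace ℝ (Fin d)) (hx : ∀ i, x i = 1 ∨ x i = -1)
    (hsat : ∃ j : Fin 3, x (idx j) = s j) :
    costE (fun j : Fin 3 => (2 * κ * s j) • EuclideanSpace.single (idx j) (1 : ℝ)) (κ • x) -
        costE (fun _ : Fin 1 => (0 : EuclideanSpace ℝ (Fin d))) (κ • x) ≤ 0 :=
  stmt_10_general d κ idx s x hsat
end
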